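/- arXiv:2105.02013 — 4 statements merged into one kernel-verified Lean document; each statement's English description precedes it below -/
import Mathlib

section
/- For every HyperLTL sentence ψ over a finite alphabet X there exists a trace-prefixed hypertrace sentence φ over X such that for every set T of infinite traces over X: T ⊨_H ψ if and only if T ⊨ φ. -/
/-- LTL formulas over an alphabet `A`. -/
inductive LTL (A : Type) : Type where
  | atom : A → LTL A
  | not  : LTL A → LTL A
  | or   : LTL A → LTL A → LTL A
  | next : LTL A → LTL A
  | untl : LTL A → LTL A → LTL A

/-- LTL satisfaction over an infinite trace. -/
def LTL.Sat {A : Type} : (ℕ → A → Bool) → LTL A → Prop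
  | τ, .atom a   => τ 0 a = true
  | τ, .not φ    => ¬ LTL.Sat τ φ
  | τ, .or φ ψ   => LTL.Sat τ φ ∨ LTL.Sat τ ψ
  | τ, .next φ   => LTL.Sat (fun n => τ (n + 1)) φ
  | τ, .untl φ ψ => ∃ j, LTL.Sat (fun n => τ (n + j)) ψ ∧
      ∀ j' < j, LTL.Sat (fun n => τ (n + j')) φ

/-- HyperLTL formulas over alphabet `X`, trace variables are natural numbers;
the quantifier-free part is an LTL formula over atoms `a_π = (a, π)`. -/
inductive HyperLTL (X : Type) : Type where
  | ex  : ℕ → HyperLTL X → HyperLTL X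
  | all : ℕ → HyperLTL X → HyperLTL X
  | qf  : LTL (X × ℕ) → HyperLTL X

/-- HyperLTL satisfaction of a quantifier-free formula by a partial trace
assignment over `T` at time `i`. -/
def HSatQF {X : Type} {T : Set (ℕ → X → Bool)} (Θ : ℕ → Option ↥T) : ℕ → LTL (X × ℕ) → Prop
  | i, .atom p   => ∃ τ : ↥T, Θ p.2 = some τ ∧ τ.1 i p.1 = true
  | i, .not φ    => ¬ HSatQF Θ i φ
  | i, .or φ ψ   => HSatQF Θ i φ ∨ HSatQF Θ i ψ
  | i, .next φ   => HSatQF Θ (i + 1) φ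
  | i, .untl φ ψ => ∃ j, i ≤ j ∧ HSatQF Θ j ψ ∧ ∀ j', i ≤ j' → j' < j → HSatQF Θ j' φ

/-- HyperLTL satisfaction: quantifiers range over `T`. -/
def HSat {X : Type} {T : Set (ℕ → X → Bool)} : (ℕ → Option ↥T) → ℕ → HyperLTL X → Prop
  | Θ, i, .ex π ψ  => ∃ τ : ↥T, HSat (Function.update Θ π (some τ)) i ψ
  | Θ, i, .all π ψ => ∀ τ : ↥T, HSat (Function.update Θ π (some τ)) i ψ
  | Θ, i, .qf φ    => HSatQF Θ i φ

/-- `T ⊨_H ψ` : satisfaction from the empty trace assignment at time 0. -/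
def HModels {X : Type} (T : Set (ℕ → X → Bool)) (ψ : HyperLTL X) : Prop :=
  HSat (T := T) (fun _ => none) 0 ψ

/-- Trace variables occurring in a quantifier-free HyperLTL formula. -/
def LTL.tvars {X : Type} : LTL (X × ℕ) → Finset ℕ
  | .atom p   => {p.2}
  | .not φ    => φ.tvars
  | .or φ ψ   => φ.tvars ∪ ψ.tvars
  | .next φ   => φ.tvars
  | .untl φ ψ => φ.tvars ∪ ψ.tvars

/-- Free trace variables of a HyperLTL formula. -/
def HyperLTL.free {X : Type} : HyperLTL X → Finset ℕ
  | .ex π ψ  => ψ.free.erase π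
  | .all π ψ => ψ.free.erase π
  | .qf φ    => φ.tvars

/-- A HyperLTL sentence has no free trace variables. -/
def HyperLTL.Closed {X : Type} (ψ : HyperLTL X) : Prop := ψ.free = ∅

/-- Time-part of trace-prefixed hypertrace formulas:
`ψ ::= ∀i.ψ | ψ∨ψ | ¬ψ | i<i' | i=i' | a(π,i)` (time variables and trace
variables are natural numbers). -/
inductive TIn (X : Type) : Type where
  | allT : ℕ → TIn X → TIn X
  | or   : TIn X → TIn X → TIn X
  | not  : TIn X → TIn X
  | lt   : ℕ → ℕ → TIn X
  | eq   : ℕ → ℕ → TIn X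
  | atom : X → ℕ → ℕ → TIn X

/-- Trace-prefixed hypertrace formulas: `φ ::= ∀π.φ | ¬φ | ψ`. -/
inductive TPr (X : Type) : Type where
  | allTr : ℕ → TPr X → TPr X
  | not   : TPr X → TPr X
  | inner : TIn X → TPr X

/-- Satisfaction of the time part, w.r.t. a time environment `te` and a trace
environment `pe`; time quantifiers range over `ℕ`. -/
def TIn.Sat {X : Type} : (ℕ → ℕ) → (ℕ → (ℕ → X → Bool)) → TIn X → Prop
  | te, pe, .allT i ψ   => ∀ n : ℕ, TIn.Sat (Function.update te i n) pe ψ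
  | te, pe, .or ψ₁ ψ₂   => TIn.Sat te pe ψ₁ ∨ TIn.Sat te pe ψ₂
  | te, pe, .not ψ      => ¬ TIn.Sat te pe ψ
  | te, _,  .lt i j     => te i < te j
  | te, _,  .eq i j     => te i = te j
  | te, pe, .atom a π i => pe π (te i) a = true

/-- Satisfaction of a trace-prefixed formula; trace quantifiers range over `T`. -/
def TPr.Sat {X : Type} (T : Set (ℕ → X → Bool)) (te : ℕ → ℕ) :
    (ℕ → (ℕ → X → Bool)) → TPr X → Prop
  | pe, .allTr π φ => ∀ τ ∈ T, TPr.Sat T te (Function.update pe π τ) φ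
  | pe, .not φ     => ¬ TPr.Sat T te pe φ
  | pe, .inner ψ   => TIn.Sat te pe ψ

/-- Free time variables of the time part. -/
def TIn.freeTime {X : Type} : TIn X → Finset ℕ
  | .allT i ψ   => ψ.freeTime.erase i
  | .or ψ₁ ψ₂   => ψ₁.freeTime ∪ ψ₂.freeTime
  | .not ψ      => ψ.freeTime
  | .lt i j     => {i, j}
  | .eq i j     => {i, j}
  | .atom _ _ i => {i}

/-- Free trace variables of the time part. -/
def TIn.freeTr {X : Type} : TIn X → Finset ℕ
  | .allT _ ψ   => ψ.freeTr
  | .or ψ₁ ψ₂   => ψ₁.freeTr ∪ ψ₂.freeTr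
  | .not ψ      => ψ.freeTr
  | .lt _ _     => ∅
  | .eq _ _     => ∅
  | .atom _ π _ => {π}

/-- Free time variables of a trace-prefixed formula. -/
def TPr.freeTime {X : Type} : TPr X → Finset ℕ
  | .allTr _ φ => φ.freeTime
  | .not φ     => φ.freeTime
  | .inner ψ   => ψ.freeTime

/-- Free trace variables of a trace-prefixed formula. -/
def TPr.freeTr {X : Type} : TPr X → Finset ℕ
  | .allTr π φ => φ.freeTr.erase π
  | .not φ     => φ.freeTr
  | .inner ψ   => ψ.freeTr

/-- A trace-prefixed hypertrace sentence: no free variables of either sort. -/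
def TPr.Closed {X : Type} (φ : TPr X) : Prop := φ.freeTime = ∅ ∧ φ.freeTr = ∅

/-- `T ⊨ φ` for a (closed) trace-prefixed hypertrace formula. -/
def TPr.Models {X : Type} (T : Set (ℕ → X → Bool)) (φ : TPr X) : Prop :=
  ∀ (te : ℕ → ℕ) (pe : ℕ → (ℕ → X → Bool)), TPr.Sat T te pe φ

/-!
Time points become first-order variables over `(ℕ, <)`. At the time held by `i`, `X φ` says
that `φ` holds at the time `j` with `i < j` and nothing strictly in between, and `φ U ψ` says
that some `j ≥ i` satisfies `ψ` while every `k` with `i ≤ k < j` satisfies `φ`; the initial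
time is the `<`-least one, and `∃π` is `¬∀π¬`. Trace quantifiers are translated in place, so
the quantifier prefix of the HyperLTL sentence stays a prefix of trace quantifiers.
-/

namespace TIn

variable {X : Type}

def and (ψ₁ ψ₂ : TIn X) : TIn X := .not (.or (.not ψ₁) (.not ψ₂))

def imp (ψ₁ ψ₂ : TIn X) : TIn X := .or (.not ψ₁) ψ₂

def exT (i : ℕ) (ψ : TIn X) : TIn X := .not (.allT i (.not ψ))

def le (i j : ℕ) : TIn X := .or (.lt i j) (.eq i j)

def isSucc (i j k : ℕ) : TIn X := and (lt i j) (allT k (.not (and (lt i k) (lt k j))))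

def isZero (i k : ℕ) : TIn X := allT k (.not (lt k i))

variable {te : ℕ → ℕ} {pe : ℕ → ℕ → X → Bool}

@[simp] theorem sat_and {ψ₁ ψ₂ : TIn X} :
    (and ψ₁ ψ₂).Sat te pe ↔ ψ₁.Sat te pe ∧ ψ₂.Sat te pe := by
  simp only [and, Sat]; tauto

@[simp] theorem sat_imp {ψ₁ ψ₂ : TIn X} :
    (imp ψ₁ ψ₂).Sat te pe ↔ (ψ₁.Sat te pe → ψ₂.Sat te pe) := by
  simp only [imp, Sat]; tauto

@[simp] theorem sat_exT {i : ℕ} {ψ : TIn X} :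
    (exT i ψ).Sat te pe ↔ ∃ n, ψ.Sat (Function.update te i n) pe := by
  simp [exT, Sat]

@[simp] theorem sat_le {i j : ℕ} : (le i j : TIn X).Sat te pe ↔ te i ≤ te j := by
  simp only [le, Sat]; omega

theorem sat_isSucc {i j k : ℕ} (hki : k ≠ i) (hkj : k ≠ j) :
    (isSucc i j k : TIn X).Sat te pe ↔ te j = te i + 1 := by
  simp only [isSucc, sat_and, Sat, Function.update_self, Function.update_of_ne hki.symm,
    Function.update_of_ne hkj.symm]
  constructor
  · rintro ⟨hlt, hgap⟩
    have := hgap (te i + 1)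
    omega
  · intro h
    exact ⟨by omega, fun n => by omega⟩

theorem sat_isZero {i k : ℕ} (hki : k ≠ i) : (isZero i k : TIn X).Sat te pe ↔ te i = 0 := by
  simp only [isZero, Sat, Function.update_self, Function.update_of_ne hki.symm]
  exact ⟨fun h => Nat.eq_zero_of_not_pos (h 0), fun h n => by omega⟩

@[simp] theorem freeTime_and {ψ₁ ψ₂ : TIn X} : (and ψ₁ ψ₂).freeTime = ψ₁.freeTime ∪ ψ₂.freeTime :=
  rfl

@[simp] theorem freeTime_imp {ψ₁ ψ₂ : TIn X} : (imp ψ₁ ψ₂).freeTime = ψ₁.freeTime ∪ ψ₂.freeTime :=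
  rfl

@[simp] theorem freeTime_exT {i : ℕ} {ψ : TIn X} : (exT i ψ).freeTime = ψ.freeTime.erase i :=
  rfl

@[simp] theorem freeTime_le {i j : ℕ} : (le i j : TIn X).freeTime = {i, j} := by
  simp [le, freeTime]

theorem freeTime_isSucc_subset {i j k : ℕ} : (isSucc i j k : TIn X).freeTime ⊆ {i, j} := by
  intro x
  simp only [isSucc, freeTime_and, freeTime, Finset.mem_union, Finset.mem_erase,
    Finset.mem_insert, Finset.mem_singleton]
  omega

theorem freeTime_isZero_subset {i k : ℕ} : (isZero i k : TIn X).freeTime ⊆ {i} := by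
  intro x
  simp only [isZero, freeTime, Finset.mem_erase, Finset.mem_insert, Finset.mem_singleton]
  omega

@[simp] theorem freeTr_and {ψ₁ ψ₂ : TIn X} : (and ψ₁ ψ₂).freeTr = ψ₁.freeTr ∪ ψ₂.freeTr := rfl

@[simp] theorem freeTr_imp {ψ₁ ψ₂ : TIn X} : (imp ψ₁ ψ₂).freeTr = ψ₁.freeTr ∪ ψ₂.freeTr := rfl

@[simp] theorem freeTr_exT {i : ℕ} {ψ : TIn X} : (exT i ψ).freeTr = ψ.freeTr := rfl

@[simp] theorem freeTr_le {i j : ℕ} : (le i j : TIn X).freeTr = ∅ := by simp [le, freeTr]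

@[simp] theorem freeTr_isSucc {i j k : ℕ} : (isSucc i j k : TIn X).freeTr = ∅ := by
  simp [isSucc, freeTr]

@[simp] theorem freeTr_isZero {i k : ℕ} : (isZero i k : TIn X).freeTr = ∅ := by
  simp [isZero, freeTr]

end TIn

def TPr.exTr {X : Type} (π : ℕ) (φ : TPr X) : TPr X := .not (.allTr π (.not φ))

theorem TPr.sat_exTr {X : Type} {T : Set (ℕ → X → Bool)} {te : ℕ → ℕ}
    {pe : ℕ → ℕ → X → Bool} {π : ℕ} {φ : TPr X} :
    (exTr π φ).Sat T te pe ↔ ∃ τ ∈ T, φ.Sat T te (Function.update pe π τ) := by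
  simp [exTr, Sat]

section Translation

variable {X : Type}

open TIn in
/-- `φ.toTIn n` speaks about the time held by the variable `n` and binds only `n + 1` and
`n + 2`, so the translations of subformulas, placed at higher variables, never capture it. -/
def LTL.toTIn : LTL (X × ℕ) → ℕ → TIn X
  | .atom p, n => .atom p.1 p.2 n
  | .not φ, n => .not (φ.toTIn n)
  | .or φ ψ, n => .or (φ.toTIn n) (ψ.toTIn n)
  | .next φ, n => .allT (n + 1) (imp (isSucc n (n + 1) (n + 2)) (φ.toTIn (n + 1)))
  | .untl φ ψ, n => exT (n + 1) (and (le n (n + 1)) (and (ψ.toTIn (n + 1))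
      (.allT (n + 2) (imp (and (le n (n + 2)) (.lt (n + 2) (n + 1))) (φ.toTIn (n + 2))))))

theorem LTL.eq_of_mem_freeTime_toTIn :
    ∀ {φ : LTL (X × ℕ)} {n x : ℕ}, x ∈ (φ.toTIn n).freeTime → x = n
  | .atom p, n, x, h => by simpa [toTIn, TIn.freeTime] using h
  | .not φ, n, x, h => eq_of_mem_freeTime_toTIn (φ := φ) h
  | .or φ ψ, n, x, h => by
      simp only [toTIn, TIn.freeTime, Finset.mem_union] at h
      exact h.elim eq_of_mem_freeTime_toTIn eq_of_mem_freeTime_toTIn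
  | .next φ, n, x, h => by
      have ih := @eq_of_mem_freeTime_toTIn φ (n + 1) x
      have hsucc := @TIn.freeTime_isSucc_subset X n (n + 1) (n + 2) x
      simp only [toTIn, TIn.freeTime, TIn.freeTime_imp, Finset.mem_erase, Finset.mem_union,
        Finset.mem_insert, Finset.mem_singleton] at h hsucc
      grind
  | .untl φ ψ, n, x, h => by
      have ihφ := @eq_of_mem_freeTime_toTIn φ (n + 2) x
      have ihψ := @eq_of_mem_freeTime_toTIn ψ (n + 1) x
      simp only [toTIn, TIn.freeTime, TIn.freeTime_exT, TIn.freeTime_and, TIn.freeTime_imp,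
        TIn.freeTime_le, Finset.mem_erase, Finset.mem_union, Finset.mem_insert,
        Finset.mem_singleton] at h
      grind

theorem LTL.freeTr_toTIn_subset : ∀ (φ : LTL (X × ℕ)) (n : ℕ), (φ.toTIn n).freeTr ⊆ φ.tvars
  | .atom p, n => by simp [toTIn, TIn.freeTr, tvars]
  | .not φ, n => freeTr_toTIn_subset φ n
  | .or φ ψ, n => Finset.union_subset_union (freeTr_toTIn_subset φ n) (freeTr_toTIn_subset ψ n)
  | .next φ, n => by simpa [toTIn, TIn.freeTr, tvars] using freeTr_toTIn_subset φ (n + 1)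
  | .untl φ ψ, n => by
      simpa [toTIn, TIn.freeTr, tvars, Finset.union_comm] using
        Finset.union_subset_union (freeTr_toTIn_subset φ (n + 2)) (freeTr_toTIn_subset ψ (n + 1))

def AgreeOn {T : Set (ℕ → X → Bool)} (Θ : ℕ → Option ↥T) (pe : ℕ → ℕ → X → Bool)
    (s : Finset ℕ) : Prop :=
  ∀ π ∈ s, (Θ π).map Subtype.val = some (pe π)

theorem AgreeOn.mono {T : Set (ℕ → X → Bool)} {Θ : ℕ → Option ↥T} {pe : ℕ → ℕ → X → Bool}
    {s t : Finset ℕ} (h : AgreeOn Θ pe t) (hst : s ⊆ t) : AgreeOn Θ pe s :=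
  fun π hπ => h π (hst hπ)

theorem AgreeOn.update {T : Set (ℕ → X → Bool)} {Θ : ℕ → Option ↥T} {pe : ℕ → ℕ → X → Bool}
    {s : Finset ℕ} {π : ℕ} (h : AgreeOn Θ pe (s.erase π)) (τ : ↥T) :
    AgreeOn (Function.update Θ π (some τ)) (Function.update pe π τ.1) s := by
  intro π' hπ'
  by_cases hπ : π' = π
  · subst hπ; simp
  · simpa [Function.update_of_ne hπ] using h π' (Finset.mem_erase.mpr ⟨hπ, hπ'⟩)

theorem LTL.sat_toTIn_iff {T : Set (ℕ → X → Bool)} {Θ : ℕ → Option ↥T} :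
    ∀ {φ : LTL (X × ℕ)} {pe : ℕ → ℕ → X → Bool}, AgreeOn Θ pe φ.tvars →
      ∀ (n : ℕ) (te : ℕ → ℕ), (φ.toTIn n).Sat te pe ↔ HSatQF Θ (te n) φ
  | .atom (a, π), pe, h, n, te => by
      obtain ⟨τ, hΘ, hτ⟩ := Option.map_eq_some_iff.mp (h π (by simp [tvars]))
      simp [toTIn, TIn.Sat, HSatQF, hΘ, ← hτ]
  | .not φ, pe, h, n, te => by
      simp only [toTIn, TIn.Sat, HSatQF, sat_toTIn_iff (φ := φ) h]
  | .or φ ψ, pe, h, n, te => by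
      simp only [toTIn, TIn.Sat, HSatQF, sat_toTIn_iff (h.mono Finset.subset_union_left),
        sat_toTIn_iff (h.mono Finset.subset_union_right)]
  | .next φ, pe, h, n, te => by
      simp only [toTIn, TIn.Sat, TIn.sat_imp, TIn.sat_isSucc (by omega : n + 2 ≠ n)
        (by omega : n + 2 ≠ n + 1), sat_toTIn_iff (φ := φ) h, Function.update_self,
        Function.update_of_ne (by omega : n ≠ n + 1), HSatQF, forall_eq]
  | .untl φ ψ, pe, h, n, te => by
      simp only [toTIn, TIn.Sat, TIn.sat_exT, TIn.sat_and, TIn.sat_imp, TIn.sat_le,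
        sat_toTIn_iff (h.mono Finset.subset_union_left),
        sat_toTIn_iff (h.mono Finset.subset_union_right), Function.update_self,
        Function.update_of_ne (by omega : n ≠ n + 1), Function.update_of_ne (by omega : n ≠ n + 2),
        Function.update_of_ne (by omega : n + 1 ≠ n + 2), HSatQF, and_imp]

def HyperLTL.toTPr : HyperLTL X → TPr X
  | .ex π ψ => .exTr π ψ.toTPr
  | .all π ψ => .allTr π ψ.toTPr
  | .qf φ => .inner (.allT 0 (.imp (.isZero 0 1) (φ.toTIn 0)))

theorem HyperLTL.freeTime_toTPr : ∀ ψ : HyperLTL X, ψ.toTPr.freeTime = ∅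
  | .ex _ ψ => freeTime_toTPr ψ
  | .all _ ψ => freeTime_toTPr ψ
  | .qf φ => by
      rw [Finset.eq_empty_iff_forall_notMem]
      intro x hx
      have hzero := @TIn.freeTime_isZero_subset X 0 1 x
      have hφ := @LTL.eq_of_mem_freeTime_toTIn X φ 0 x
      simp only [toTPr, TPr.freeTime, TIn.freeTime, TIn.freeTime_imp, Finset.mem_erase,
        Finset.mem_union, Finset.mem_singleton] at hx hzero
      grind

theorem HyperLTL.freeTr_toTPr_subset : ∀ ψ : HyperLTL X, ψ.toTPr.freeTr ⊆ ψ.free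
  | .ex _ ψ => Finset.erase_subset_erase _ (freeTr_toTPr_subset ψ)
  | .all _ ψ => Finset.erase_subset_erase _ (freeTr_toTPr_subset ψ)
  | .qf φ => by
      simpa [toTPr, TPr.freeTr, TIn.freeTr, free] using φ.freeTr_toTIn_subset 0

theorem HyperLTL.sat_toTPr_iff {T : Set (ℕ → X → Bool)} (te : ℕ → ℕ) :
    ∀ {ψ : HyperLTL X} {Θ : ℕ → Option ↥T} {pe : ℕ → ℕ → X → Bool}, AgreeOn Θ pe ψ.free →
      (ψ.toTPr.Sat T te pe ↔ HSat Θ 0 ψ)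
  | .ex π ψ, Θ, pe, h => by
      have ih (τ : ↥T) := sat_toTPr_iff te (AgreeOn.update (s := ψ.free) h τ)
      simp only [toTPr, TPr.sat_exTr, HSat, ← ih, Subtype.exists, exists_prop]
  | .all π ψ, Θ, pe, h => by
      have ih (τ : ↥T) := sat_toTPr_iff te (AgreeOn.update (s := ψ.free) h τ)
      simp only [toTPr, TPr.Sat, HSat, ← ih, Subtype.forall]
  | .qf φ, Θ, pe, h => by
      simp only [toTPr, TPr.Sat, TIn.Sat, TIn.sat_imp, TIn.sat_isZero (by omega : 1 ≠ 0),
        LTL.sat_toTIn_iff (φ := φ) h, Function.update_self, HSat, forall_eq]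

end Translation

theorem hyperLTL_to_tracePrefixed_general
    {X : Type} (ψ : HyperLTL X) (hψ : ψ.Closed) :
    ∃ φ : TPr X, φ.Closed ∧
      ∀ T : Set (ℕ → X → Bool), HModels T ψ ↔ TPr.Models T φ := by
  have hfree : ψ.free = ∅ := hψ
  refine ⟨ψ.toTPr, ⟨ψ.freeTime_toTPr, Finset.subset_empty.mp (hfree ▸ ψ.freeTr_toTPr_subset)⟩,
    fun T => ?_⟩
  have hsat : ∀ te pe, ψ.toTPr.Sat T te pe ↔ HModels T ψ := fun te pe =>
    HyperLTL.sat_toTPr_iff te (by simp [AgreeOn, hfree])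
  exact ⟨fun h te pe => (hsat te pe).mpr h, fun h => (hsat default default).mp (h _ _)⟩

/-- For every HyperLTL sentence `ψ` over a finite alphabet `X` there
exists a trace-prefixed hypertrace sentence `φ` over `X` such that for every set `T`
of infinite traces over `X`: `T ⊨_H ψ` iff `T ⊨ φ`. -/
theorem hyperLTL_to_tracePrefixed
    {X : Type} [Finite X] (ψ : HyperLTL X) (hψ : ψ.Closed) :
    ∃ φ : TPr X, φ.Closed ∧
      ∀ T : Set (ℕ → X → Bool), HModels T ψ ↔ TPr.Models T φ :=
  hyperLTL_to_tracePrefixed_general ψ hψ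
end

section
/- Let C be a class of LTL formulas and ≈_C an equivalence on traces for C. Let φ be a HyperLTL formula (possibly with free trace variables) in the class 2^C, let V(φ) be the set of trace variables occurring in φ, and let T and T' be sets of infinite traces that are (|V(φ)|, C)-equivalent. Then for every bijection f : T → T' witnessing the equivalence and all trace assignments Π over T and Π' over T' whose domains are exactly the set of free trace variables of φ: (Π,0) ⊨ φ iff (f∘Π, 0) ⊨ φ, and (Π',0) ⊨ φ iff (f⁻¹∘Π', 0) ⊨ φ. -/
/-- All trace variables occurring in a HyperLTL formula. -/
def HyperLTL.vars {X : Type} : HyperLTL X → Finset ℕ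
  | .ex π ψ  => insert π ψ.vars
  | .all π ψ => insert π ψ.vars
  | .qf φ    => φ.tvars

/-- Flattening of a trace assignment: an infinite trace over the alphabet `X × ℕ`
(`false` on pairs `(a, π)` with `π` outside the domain of the assignment). -/
def flat {X : Type} {T : Set (ℕ → X → Bool)} (Θ : ℕ → Option ↥T) : ℕ → (X × ℕ) → Bool :=
  fun i p => ((Θ p.2).map (fun τ => τ.1 i p.1)).getD false

/-- The domain of the assignment consists of exactly `k` trace variables. -/
def HasDomCard {X : Type} {T : Set (ℕ → X → Bool)} (Θ : ℕ → Option ↥T) (k : ℕ) : Prop :=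
  ∃ s : Finset ℕ, (∀ π, (Θ π).isSome ↔ π ∈ s) ∧ s.card = k

/-- Composition `f ∘ Θ` of a bijection `f : T → T'` with an assignment over `T`. -/
def mapAssign {X : Type} {T T' : Set (ℕ → X → Bool)} (f : ↥T ≃ ↥T') (Θ : ℕ → Option ↥T) :
    ℕ → Option ↥T' := fun π => (Θ π).map f

/-- `R` is an equivalence on traces for the class `C` of LTL formulas: an equivalence
relation such that `R`-related traces satisfy exactly the same formulas of `C`. -/
def EquivOnTracesFor {A : Type} (C : Set (LTL A))
    (R : (ℕ → A → Bool) → (ℕ → A → Bool) → Prop) : Prop :=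
  Equivalence R ∧ ∀ φ ∈ C, ∀ τ τ', R τ τ' → (LTL.Sat τ φ ↔ LTL.Sat τ' φ)

/-- The bijection `f : T → T'` witnesses that `T` and `T'` are `(k, C)`-equivalent
(w.r.t. the trace equivalence `R`). -/
def KCEquivWith {X : Type}
    (R : (ℕ → (X × ℕ) → Bool) → (ℕ → (X × ℕ) → Bool) → Prop) (k : ℕ)
    (T T' : Set (ℕ → X → Bool)) (f : ↥T ≃ ↥T') : Prop :=
  (∀ Θ : ℕ → Option ↥T, HasDomCard Θ k → R (flat Θ) (flat (mapAssign f Θ))) ∧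
  (∀ Θ' : ℕ → Option ↥T', HasDomCard Θ' k → R (flat Θ') (flat (mapAssign f.symm Θ')))

/-- A HyperLTL formula `Q₁π₁…Qₙπₙ.φ` lies in the class `2^C` iff its quantifier-free
part `φ`, read as an LTL formula over the alphabet `X × ℕ`, belongs to `C`. -/
def HyperLTL.InClass {X : Type} (C : Set (LTL (X × ℕ))) : HyperLTL X → Prop
  | .ex _ ψ  => ψ.InClass C
  | .all _ ψ => ψ.InClass C
  | .qf φ    => φ ∈ C

/-! Induct on the quantifier prefix while tracking the domain `s` of the assignment. A quantifier
step transports witnesses along the bijection, and since `s ∪ V(ψ)` is invariant under peeling off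
a quantifier, at the quantifier-free matrix the domain is exactly `V(φ)`; there the
`(|V(φ)|, C)`-equivalence relates the two flattened assignments, which satisfy the same formulas
of `C`. -/

theorem exists_until_shift_iff {P Q : ℕ → Prop} (i : ℕ) :
    (∃ j, i ≤ j ∧ P j ∧ ∀ j', i ≤ j' → j' < j → Q j') ↔
      ∃ j, P (j + i) ∧ ∀ j' < j, Q (j' + i) := by
  constructor
  · rintro ⟨j, hij, hP, hQ⟩
    refine ⟨j - i, by rwa [Nat.sub_add_cancel hij], fun j' hj' => hQ _ (by omega) (by omega)⟩
  · rintro ⟨j, hP, hQ⟩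
    refine ⟨j + i, by omega, hP, fun j' hij' hj' => ?_⟩
    simpa [Nat.sub_add_cancel hij'] using hQ (j' - i) (by omega)

theorem hsatQF_iff_sat_flat {X : Type} {T : Set (ℕ → X → Bool)} (Θ : ℕ → Option ↥T)
    (χ : LTL (X × ℕ)) (i : ℕ) :
    HSatQF Θ i χ ↔ LTL.Sat (fun n => flat Θ (n + i)) χ := by
  induction χ generalizing i with
  | atom p => cases h : Θ p.2 <;> simp [HSatQF, LTL.Sat, flat, h]
  | not χ ih => simp only [HSatQF, LTL.Sat, ih]
  | or χ₁ χ₂ ih₁ ih₂ => simp only [HSatQF, LTL.Sat, ih₁, ih₂]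
  | next χ ih => simp only [HSatQF, LTL.Sat, ih, Nat.add_right_comm _ 1 i, Nat.add_assoc]
  | untl χ₁ χ₂ ih₁ ih₂ =>
    simp only [HSatQF, LTL.Sat, ih₁, ih₂, Nat.add_assoc]
    exact exists_until_shift_iff i

theorem HyperLTL.free_subset_vars {X : Type} (ψ : HyperLTL X) : ψ.free ⊆ ψ.vars := by
  induction ψ with
  | ex π ψ ih | all π ψ ih =>
    exact (Finset.erase_subset π _).trans (ih.trans (Finset.subset_insert π _))
  | qf χ => exact subset_rfl

theorem mapAssign_update {X : Type} {T T' : Set (ℕ → X → Bool)} (g : ↥T ≃ ↥T')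
    (Θ : ℕ → Option ↥T) (π : ℕ) (τ : ↥T) :
    mapAssign g (Function.update Θ π (some τ)) = Function.update (mapAssign g Θ) π (some (g τ)) :=
  Function.comp_update (Option.map g) Θ π (some τ)

theorem isSome_update_iff {α : Type*} {Θ : ℕ → Option α} {s : Finset ℕ}
    (hΘ : ∀ π, (Θ π).isSome ↔ π ∈ s) (π : ℕ) (τ : α) (π' : ℕ) :
    (Function.update Θ π (some τ) π').isSome ↔ π' ∈ insert π s := by
  by_cases h : π' = π <;> simp [Function.update, h, hΘ π']

theorem hsat_mapAssign_iff {X : Type} {C : Set (LTL (X × ℕ))}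
    {R : (ℕ → (X × ℕ) → Bool) → (ℕ → (X × ℕ) → Bool) → Prop}
    (hR : ∀ χ ∈ C, ∀ τ τ', R τ τ' → (LTL.Sat τ χ ↔ LTL.Sat τ' χ))
    {T T' : Set (ℕ → X → Bool)} (g : ↥T ≃ ↥T') {k : ℕ}
    (hg : ∀ Θ : ℕ → Option ↥T, HasDomCard Θ k → R (flat Θ) (flat (mapAssign g Θ)))
    (ψ : HyperLTL X) (hψ : ψ.InClass C) {s : Finset ℕ} (hfree : ψ.free ⊆ s)
    (hcard : (s ∪ ψ.vars).card = k) {Θ : ℕ → Option ↥T} (hΘ : ∀ π, (Θ π).isSome ↔ π ∈ s) :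
    HSat Θ 0 ψ ↔ HSat (mapAssign g Θ) 0 ψ := by
  induction ψ generalizing s Θ with
  | ex π ψ ih | all π ψ ih =>
    have ih' (τ : ↥T) : HSat (Function.update Θ π (some τ)) 0 ψ ↔
        HSat (Function.update (mapAssign g Θ) π (some (g τ))) 0 ψ := by
      rw [← mapAssign_update]
      exact ih hψ (Finset.subset_insert_iff.mpr hfree)
        (by rwa [Finset.insert_union, ← Finset.union_insert]) (isSome_update_iff hΘ π τ)
    first
    | exact g.exists_congr ih'
    | exact g.forall_congr ih'
  | qf χ =>
    have hs : s.card = k := by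
      rwa [Finset.union_eq_left.mpr (show (HyperLTL.qf χ).vars ⊆ s from hfree)] at hcard
    exact (hsatQF_iff_sat_flat Θ χ 0).trans <|
      (hR χ hψ _ _ (hg Θ ⟨s, hΘ, hs⟩)).trans (hsatQF_iff_sat_flat _ χ 0).symm

theorem kcEquiv_preserves_open_hyperLTL_general
    {X : Type} (C : Set (LTL (X × ℕ)))
    (R : (ℕ → (X × ℕ) → Bool) → (ℕ → (X × ℕ) → Bool) → Prop)
    (hR : EquivOnTracesFor C R)
    (φ : HyperLTL X) (hφ : φ.InClass C)
    (T T' : Set (ℕ → X → Bool)) (f : ↥T ≃ ↥T')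
    (hf : KCEquivWith R φ.vars.card T T' f)
    (Θ : ℕ → Option ↥T) (Θ' : ℕ → Option ↥T')
    (hΘ : ∀ π, (Θ π).isSome ↔ π ∈ φ.free)
    (hΘ' : ∀ π, (Θ' π).isSome ↔ π ∈ φ.free) :
    (HSat Θ 0 φ ↔ HSat (mapAssign f Θ) 0 φ) ∧
    (HSat Θ' 0 φ ↔ HSat (mapAssign f.symm Θ') 0 φ) := by
  have hcard : (φ.free ∪ φ.vars).card = φ.vars.card := by
    rw [Finset.union_eq_right.mpr φ.free_subset_vars]
  exact ⟨hsat_mapAssign_iff hR.2 f hf.1 φ hφ subset_rfl hcard hΘ,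
    hsat_mapAssign_iff hR.2 f.symm hf.2 φ hφ subset_rfl hcard hΘ'⟩

/-- Lemma on open formulas. Let `C` be a class of LTL formulas and `R`
an equivalence on traces for `C`. Let `φ ∈ 2^C` (possibly with free trace variables) and
let `T ≈_(|V(φ)|,C) T'` be witnessed by the bijection `f`. Then for all trace assignments
`Θ` over `T` and `Θ'` over `T'` whose domains are exactly the free trace variables of `φ`:
`(Θ,0) ⊨ φ ↔ (f∘Θ,0) ⊨ φ` and `(Θ',0) ⊨ φ ↔ (f⁻¹∘Θ',0) ⊨ φ`. -/
theorem kcEquiv_preserves_open_hyperLTL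
    {X : Type} [Finite X] (C : Set (LTL (X × ℕ)))
    (R : (ℕ → (X × ℕ) → Bool) → (ℕ → (X × ℕ) → Bool) → Prop)
    (hR : EquivOnTracesFor C R)
    (φ : HyperLTL X) (hφ : φ.InClass C)
    (T T' : Set (ℕ → X → Bool)) (f : ↥T ≃ ↥T')
    (hf : KCEquivWith R φ.vars.card T T' f)
    (Θ : ℕ → Option ↥T) (Θ' : ℕ → Option ↥T')
    (hΘ : ∀ π, (Θ π).isSome ↔ π ∈ φ.free)
    (hΘ' : ∀ π, (Θ' π).isSome ↔ π ∈ φ.free) :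
    (HSat Θ 0 φ ↔ HSat (mapAssign f Θ) 0 φ) ∧
    (HSat Θ' 0 φ ↔ HSat (mapAssign f.symm Θ') 0 φ) :=
  kcEquiv_preserves_open_hyperLTL_general C R hR φ hφ T T' f hf Θ Θ' hΘ hΘ'
end

section
/- For all infinite traces τ and τ' over a finite alphabet X: {τ(i) : i ∈ ℕ} = {τ'(j) : j ∈ ℕ} if and only if for every LTL formula φ in the class 𝔾, τ ⊨ φ iff τ' ⊨ φ. -/
/-- Propositional LTL formulas: no temporal operators. -/
def LTL.Propositional {A : Type} : LTL A → Prop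
  | .atom _   => True
  | .not φ    => φ.Propositional
  | .or φ ψ   => φ.Propositional ∧ ψ.Propositional
  | .next _   => False
  | .untl _ _ => False

/-- A tautology `⊤` (written `a ∨ ¬a` for an atom `a`). -/
def ltlTop {A : Type} (a : A) : LTL A := .or (.atom a) (.not (.atom a))

/-- `G φ`, abbreviating `¬(⊤ U ¬φ)`. -/
def ltlG {A : Type} (a : A) (φ : LTL A) : LTL A := .not (.untl (ltlTop a) (.not φ))

/-- The class `𝔾` of LTL formulas `G ψ` with `ψ` propositional. -/
def GClass (A : Type) : Set (LTL A) := {φ | ∃ a ψ, LTL.Propositional ψ ∧ φ = ltlG a ψ}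

namespace LTL

variable {A : Type}

theorem sat_ltlTop (τ : ℕ → A → Bool) (a : A) : Sat τ (ltlTop a) := by
  simp [ltlTop, Sat]

theorem Propositional.sat_congr {ψ : LTL A} (hψ : ψ.Propositional) {τ τ' : ℕ → A → Bool}
    (h : τ 0 = τ' 0) : Sat τ ψ ↔ Sat τ' ψ := by
  induction ψ with
  | atom a => simp [Sat, h]
  | not φ ih => exact not_congr (ih hψ)
  | or φ χ ihφ ihχ => exact or_congr (ihφ hψ.1) (ihχ hψ.2)
  | next => exact hψ.elim
  | untl => exact hψ.elim

theorem sat_ltlG_iff (a : A) {ψ : LTL A} (hψ : ψ.Propositional) (τ : ℕ → A → Bool) :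
    Sat τ (ltlG a ψ) ↔ ∀ v ∈ Set.range τ, Sat (fun _ => v) ψ := by
  have shift_congr (j : ℕ) : Sat (fun n => τ (n + j)) ψ ↔ Sat (fun _ => τ j) ψ :=
    hψ.sat_congr (by simp)
  simp only [ltlG, Sat, shift_congr, Set.forall_mem_range, not_exists, not_and]
  exact forall_congr' fun j => ⟨fun h => not_not.mp fun hn => h hn fun j' _ => sat_ltlTop _ a,
    fun h hn _ => hn h⟩

def and (φ ψ : LTL A) : LTL A := .not (.or (.not φ) (.not ψ))

def literal (x : A) (b : Bool) : LTL A := if b then .atom x else .not (.atom x)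

theorem sat_literal (τ : ℕ → A → Bool) (x : A) (b : Bool) :
    Sat τ (literal x b) ↔ τ 0 x = b := by
  cases b <;> simp [literal, Sat]

/-- The atom `a` only serves to write `⊤` for the empty conjunction. -/
def valuationFormula (a : A) (v : A → Bool) : List A → LTL A
  | [] => ltlTop a
  | x :: l => and (literal x (v x)) (valuationFormula a v l)

theorem propositional_valuationFormula (a : A) (v : A → Bool) (l : List A) :
    (valuationFormula a v l).Propositional := by
  induction l with
  | nil => exact ⟨trivial, trivial⟩
  | cons x l ih =>
    refine ⟨?_, ih⟩
    cases v x <;> exact trivial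

theorem sat_valuationFormula (τ : ℕ → A → Bool) (a : A) (v : A → Bool) (l : List A) :
    Sat τ (valuationFormula a v l) ↔ ∀ x ∈ l, τ 0 x = v x := by
  induction l with
  | nil => simpa [valuationFormula] using sat_ltlTop τ a
  | cons x l ih => simp [valuationFormula, and, Sat, sat_literal, ih]

end LTL

open LTL

theorem range_subset_of_GClass_equiv {X : Type} [Finite X] {τ τ' : ℕ → X → Bool}
    (h : ∀ φ ∈ GClass X, (Sat τ φ ↔ Sat τ' φ)) : Set.range τ ⊆ Set.range τ' := by
  rintro _ ⟨i, rfl⟩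
  cases isEmpty_or_nonempty X with
  | inl _ => exact ⟨0, Subsingleton.elim _ _⟩
  | inr hX =>
    obtain ⟨a⟩ := hX
    obtain ⟨l, -, hl⟩ := Finite.exists_univ_list X
    have sat_iff (σ : ℕ → X → Bool) (j : ℕ) :
        Sat (fun _ => σ j) (valuationFormula a (τ i) l) ↔ σ j = τ i := by
      simp [sat_valuationFormula, hl, funext_iff]
    have hχ : (LTL.not (valuationFormula a (τ i) l)).Propositional :=
      propositional_valuationFormula a (τ i) l
    have hG := h _ ⟨a, _, hχ, rfl⟩
    simp only [sat_ltlG_iff a hχ, Set.forall_mem_range, Sat, sat_iff] at hG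
    by_contra hne
    exact (hG.mpr fun j hj => hne ⟨j, hj⟩) i rfl

/-- For all infinite traces `τ` and `τ'` over a finite alphabet `X`:
`{τ(i) : i ∈ ℕ} = {τ'(j) : j ∈ ℕ}` iff `τ` and `τ'` satisfy exactly the same
LTL formulas of the class `𝔾`. -/
theorem sameValuations_iff_GClass_equiv
    {X : Type} [Finite X] (τ τ' : ℕ → X → Bool) :
    Set.range τ = Set.range τ' ↔ ∀ φ ∈ GClass X, (LTL.Sat τ φ ↔ LTL.Sat τ' φ) := by
  constructor
  · rintro h φ ⟨a, ψ, hψ, rfl⟩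
    rw [sat_ltlG_iff a hψ, sat_ltlG_iff a hψ, h]
  · intro h
    exact (range_subset_of_GClass_equiv h).antisymm
      (range_subset_of_GClass_equiv fun φ hφ => (h φ hφ).symm)
end

section
/- For every time-prefixed hypertrace sentence φ over a finite alphabet X, letting k be the number of time variables occurring in φ, and for all sets of infinite traces T and T' over X that are k-point equivalent: T ⊨ φ if and only if T' ⊨ φ. -/
/-- Trace-part of time-prefixed hypertrace formulas:
`ψ ::= ∀π.ψ | ψ∨ψ | ¬ψ | a(π,i)` (trace and time variables are naturals). -/
inductive TrIn (X : Type) : Type where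
  | allTr : ℕ → TrIn X → TrIn X
  | or    : TrIn X → TrIn X → TrIn X
  | not   : TrIn X → TrIn X
  | atom  : X → ℕ → ℕ → TrIn X

/-- Time-prefixed hypertrace formulas: `φ ::= ∀i.φ | ¬φ | i<i' | i=i' | φ∨φ | ψ`. -/
inductive TimeP (X : Type) : Type where
  | allTime : ℕ → TimeP X → TimeP X
  | not     : TimeP X → TimeP X
  | lt      : ℕ → ℕ → TimeP X
  | eq      : ℕ → ℕ → TimeP X
  | or      : TimeP X → TimeP X → TimeP X
  | inner   : TrIn X → TimeP X

/-- Satisfaction of the trace part, with time environment `te` and trace environment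
`pe`; trace quantifiers range over `T`. -/
def TrIn.Sat {X : Type} (T : Set (ℕ → X → Bool)) (te : ℕ → ℕ) :
    (ℕ → (ℕ → X → Bool)) → TrIn X → Prop
  | pe, .allTr π ψ   => ∀ τ ∈ T, TrIn.Sat T te (Function.update pe π τ) ψ
  | pe, .or ψ₁ ψ₂    => TrIn.Sat T te pe ψ₁ ∨ TrIn.Sat T te pe ψ₂
  | pe, .not ψ       => ¬ TrIn.Sat T te pe ψ
  | pe, .atom a π i  => pe π (te i) a = true

/-- Satisfaction of a time-prefixed formula; time quantifiers range over `ℕ`. -/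
def TimeP.Sat {X : Type} (T : Set (ℕ → X → Bool)) :
    (ℕ → ℕ) → (ℕ → (ℕ → X → Bool)) → TimeP X → Prop
  | te, pe, .allTime i φ => ∀ n : ℕ, TimeP.Sat T (Function.update te i n) pe φ
  | te, pe, .not φ       => ¬ TimeP.Sat T te pe φ
  | te, _,  .lt i j      => te i < te j
  | te, _,  .eq i j      => te i = te j
  | te, pe, .or φ₁ φ₂    => TimeP.Sat T te pe φ₁ ∨ TimeP.Sat T te pe φ₂
  | te, pe, .inner ψ     => TrIn.Sat T te pe ψ

/-- Time variables occurring in the trace part. -/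
def TrIn.timeVars {X : Type} : TrIn X → Finset ℕ
  | .allTr _ ψ  => ψ.timeVars
  | .or ψ₁ ψ₂   => ψ₁.timeVars ∪ ψ₂.timeVars
  | .not ψ      => ψ.timeVars
  | .atom _ _ i => {i}

/-- Free trace variables of the trace part. -/
def TrIn.freeTr {X : Type} : TrIn X → Finset ℕ
  | .allTr π ψ  => ψ.freeTr.erase π
  | .or ψ₁ ψ₂   => ψ₁.freeTr ∪ ψ₂.freeTr
  | .not ψ      => ψ.freeTr
  | .atom _ π _ => {π}

/-- All time variables occurring in a time-prefixed formula. -/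
def TimeP.timeVars {X : Type} : TimeP X → Finset ℕ
  | .allTime i φ => insert i φ.timeVars
  | .not φ       => φ.timeVars
  | .lt i j      => {i, j}
  | .eq i j      => {i, j}
  | .or φ₁ φ₂    => φ₁.timeVars ∪ φ₂.timeVars
  | .inner ψ     => ψ.timeVars

/-- Free time variables of a time-prefixed formula. -/
def TimeP.freeTime {X : Type} : TimeP X → Finset ℕ
  | .allTime i φ => φ.freeTime.erase i
  | .not φ       => φ.freeTime
  | .lt i j      => {i, j}
  | .eq i j      => {i, j}
  | .or φ₁ φ₂    => φ₁.freeTime ∪ φ₂.freeTime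
  | .inner ψ     => ψ.timeVars

/-- Free trace variables of a time-prefixed formula. -/
def TimeP.freeTr {X : Type} : TimeP X → Finset ℕ
  | .allTime _ φ => φ.freeTr
  | .not φ       => φ.freeTr
  | .lt _ _      => ∅
  | .eq _ _      => ∅
  | .or φ₁ φ₂    => φ₁.freeTr ∪ φ₂.freeTr
  | .inner ψ     => ψ.freeTr

/-- A time-prefixed hypertrace sentence: no free variables of either sort. -/
def TimeP.Closed {X : Type} (φ : TimeP X) : Prop := φ.freeTime = ∅ ∧ φ.freeTr = ∅

/-- `T ⊨ φ` for a (closed) time-prefixed hypertrace formula. -/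
def TimeP.Models {X : Type} (T : Set (ℕ → X → Bool)) (φ : TimeP X) : Prop :=
  ∀ (te : ℕ → ℕ) (pe : ℕ → (ℕ → X → Bool)), TimeP.Sat T te pe φ

/-- `T` and `T'` are `k`-point equivalent: for every `k`-tuple of time positions there
is a bijection between `T` and `T'` preserving the valuations at those positions. -/
def KPointEquiv {X : Type} (k : ℕ) (T T' : Set (ℕ → X → Bool)) : Prop :=
  ∀ idx : Fin k → ℕ, ∃ f : ↥T ≃ ↥T',
    (∀ τ : ↥T, ∀ j : Fin k, τ.1 (idx j) = (f τ).1 (idx j)) ∧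
    (∀ τ' : ↥T', ∀ j : Fin k, τ'.1 (idx j) = (f.symm τ').1 (idx j))

/-
A formula can only inspect a trace through the valuations at the positions its time variables
name. Once the time variables are fixed, these are at most `k` positions, and a bijection between
`T` and `T'` that preserves the valuations there lets every trace quantifier of one side be matched
with one of the other, so the trace part has the same truth value on both sides. Time quantifiers,
comparisons and Boolean connectives do not look at the traces at all.
-/

namespace KPointEquiv

variable {X : Type} {T T' : Set (ℕ → X → Bool)}

theorem exists_equiv_eqOn_image {V : Finset ℕ} (h : KPointEquiv V.card T T') (te : ℕ → ℕ) :
    ∃ f : T ≃ T', ∀ τ : T, Set.EqOn τ.1 (f τ).1 (te '' V) := by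
  obtain ⟨f, hf, -⟩ := h fun j => te (V.equivFin.symm j)
  refine ⟨f, fun τ => ?_⟩
  rintro _ ⟨i, hi, rfl⟩
  simpa using hf τ (V.equivFin ⟨i, hi⟩)

end KPointEquiv

namespace TrIn

variable {X : Type} {T T' : Set (ℕ → X → Bool)}

theorem sat_iff_of_equiv {S : Set ℕ} (f : T ≃ T') (hf : ∀ τ : T, Set.EqOn τ.1 (f τ).1 S)
    (te : ℕ → ℕ) (ψ : TrIn X) (hψ : Set.MapsTo te ψ.timeVars S)
    (pe pe' : ℕ → ℕ → X → Bool) (hpe : ∀ π, Set.EqOn (pe π) (pe' π) S) :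
    Sat T te pe ψ ↔ Sat T' te pe' ψ := by
  induction ψ generalizing pe pe' with
  | allTr π ψ ih =>
    refine SetCoe.forall'.trans <| (f.forall_congr fun τ => ih hψ _ _ fun π' => ?_).trans
      SetCoe.forall'.symm
    rcases eq_or_ne π' π with rfl | hne
    · simpa using hf τ
    · simpa [Function.update_of_ne hne] using hpe π'
  | or ψ₁ ψ₂ ih₁ ih₂ =>
    have hψ₁ : Set.MapsTo te ψ₁.timeVars S := hψ.mono_left (by simp [timeVars])
    have hψ₂ : Set.MapsTo te ψ₂.timeVars S := hψ.mono_left (by simp [timeVars])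
    exact or_congr (ih₁ hψ₁ pe pe' hpe) (ih₂ hψ₂ pe pe' hpe)
  | not ψ ih => exact not_congr (ih hψ pe pe' hpe)
  | atom a π i =>
    have hi : te i ∈ S := hψ (by simp [timeVars])
    simp only [Sat, hpe π hi]

end TrIn

namespace TimeP

variable {X : Type} {T T' : Set (ℕ → X → Bool)}

theorem sat_iff_of_forall_exists_equiv {V : Finset ℕ}
    (H : ∀ te : ℕ → ℕ, ∃ f : T ≃ T', ∀ τ : T, Set.EqOn τ.1 (f τ).1 (te '' V))
    (φ : TimeP X) (hφ : φ.timeVars ⊆ V) (te : ℕ → ℕ) (pe : ℕ → ℕ → X → Bool) :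
    Sat T te pe φ ↔ Sat T' te pe φ := by
  induction φ generalizing te with
  | allTime i φ ih =>
    exact forall_congr' fun n => ih ((Finset.subset_insert i _).trans hφ) _
  | not φ ih => exact not_congr (ih hφ te)
  | lt i j => rfl
  | eq i j => rfl
  | or φ₁ φ₂ ih₁ ih₂ =>
    rw [timeVars, Finset.union_subset_iff] at hφ
    exact or_congr (ih₁ hφ.1 te) (ih₂ hφ.2 te)
  | inner ψ =>
    obtain ⟨f, hf⟩ := H te
    exact TrIn.sat_iff_of_equiv f hf te ψ ((Set.mapsTo_image te _).mono_left hφ) pe pe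
      fun _ => Set.eqOn_refl _ _

end TimeP

theorem kPointEquiv_preserves_timePrefixed_general
    {X : Type} (φ : TimeP X)
    (T T' : Set (ℕ → X → Bool)) (h : KPointEquiv φ.timeVars.card T T') :
    TimeP.Models T φ ↔ TimeP.Models T' φ :=
  forall₂_congr fun te pe =>
    TimeP.sat_iff_of_forall_exists_equiv h.exists_equiv_eqOn_image φ subset_rfl te pe

/-- For every time-prefixed hypertrace sentence `φ` over a finite
alphabet `X`, with `k` the number of time variables occurring in `φ`, and all sets of
infinite traces `T`, `T'` that are `k`-point equivalent: `T ⊨ φ` iff `T' ⊨ φ`. -/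
theorem kPointEquiv_preserves_timePrefixed
    {X : Type} [Finite X] (φ : TimeP X) (hφ : φ.Closed)
    (T T' : Set (ℕ → X → Bool)) (h : KPointEquiv φ.timeVars.card T T') :
    TimeP.Models T φ ↔ TimeP.Models T' φ :=
  kPointEquiv_preserves_timePrefixed_general φ T T' h
end
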